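/- Let G be a finite group, H a normal subgroup of G, T ⊆ G a transversal of H in G, π : G → G/H the natural projection, and τ : G/H → T the section satisfying π(τ(q)) = q for all q ∈ G/H and τ(π(t)) = t for all t ∈ T. Suppose Φ : G/H → G/H is a colouring bijection, and define φ : T → T by φ(t) = τ(Φ(π(t))). For t ∈ T, writing q = π(t), set t₁(t) = τ(Φ(q)·q), t₂(t) = τ(q⁻¹·Φ(q)), t₃(t) = τ(q⁻¹·Φ(q)·q). Then: (1) φ is a bijection of T; (2) for every t ∈ T there exist uniquely determined elements ξ(t), ζ(t), ω(t) ∈ H with φ(t)·t = ξ(t)·t₁(t), t⁻¹·φ(t) = ζ(t)·t₂(t), and t⁻¹·φ(t)·t = ω(t)·t₃(t); and (3) each of the maps t ↦ t₁(t), t ↦ t₂(t), t ↦ t₃(t) is a bijection of T. -/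
import Mathlib


section Aux
variable {G : Type*} [Group G] (H : Subgroup G) [H.Normal]

lemma aux_exu {a b : G} (h : (a : G ⧸ H) = b) : ∃! ξ : H, a = (ξ : G) * b := by
  have h1 : b⁻¹ * a ∈ H := QuotientGroup.eq.mp h.symm
  have hab : a * b⁻¹ ∈ H := by
    have h2 := Subgroup.Normal.conj_mem ‹H.Normal› _ h1 a
    have : a * (b⁻¹ * a) * a⁻¹ = a * b⁻¹ := by group
    rwa [this] at h2
  refine ⟨⟨a * b⁻¹, hab⟩, by group, ?_⟩
  rintro ⟨x, hx⟩ h'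
  ext
  simp only [Subgroup.coe_mk]
  have : a = x * b := h'
  rw [this]; group

lemma aux_bij {T : Set G} (τ : G ⧸ H → T)
    (hπτ : ∀ q : G ⧸ H, ((τ q : G) : G ⧸ H) = q)
    (hτπ : ∀ t : T, τ (((t : G) : G ⧸ H)) = t)
    (f : G ⧸ H → G ⧸ H) (hf : Function.Bijective f) :
    Function.Bijective (fun t : T => τ (f ((t : G) : G ⧸ H))) := by
  constructor
  · intro s t h
    have h2 : f ((s : G) : G ⧸ H) = f ((t : G) : G ⧸ H) := by
      have := congrArg (fun x : T => ((x : G) : G ⧸ H)) h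
      simpa [hπτ] using this
    have h3 := hf.injective h2
    calc s = τ (((s : G) : G ⧸ H)) := (hτπ s).symm
      _ = τ (((t : G) : G ⧸ H)) := by rw [h3]
      _ = t := hτπ t
  · intro s
    obtain ⟨q, hq⟩ := hf.surjective (((s : G) : G ⧸ H))
    refine ⟨τ q, ?_⟩
    simp only [hπτ, hq, hτπ]

end Aux

/-- A bijection `Φ : Q → Q` is a *colouring bijection* if the three maps
`q ↦ Φ(q)·q`, `q ↦ q⁻¹·Φ(q)` and `q ↦ q⁻¹·Φ(q)·q` are bijections of `Q`. -/


def IsColouringBijection {Q : Type*} [Group Q] (Φ : Q → Q) : Prop :=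
  Function.Bijective Φ ∧
    Function.Bijective (fun q => Φ q * q) ∧
    Function.Bijective (fun q => q⁻¹ * Φ q) ∧
    Function.Bijective (fun q => q⁻¹ * Φ q * q)

/-- Transversal scheme: let `H ⊴ G`, `T ⊆ G` a transversal of `H`,
`π : G → G/H` the projection and `τ : G/H → T` the associated section
(`π ∘ τ = id` and `τ ∘ π = id` on `T`).  If `Φ : G/H → G/H` is a colouring
bijection and `φ(t) = τ(Φ(π(t)))`, `t₁(t) = τ(Φ(q)q)`, `t₂(t) = τ(q⁻¹Φ(q))`,
`t₃(t) = τ(q⁻¹Φ(q)q)` (with `q = π(t)`), then `φ` is a bijection of `T`, for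
every `t ∈ T` there are unique `ξ(t), ζ(t), ω(t) ∈ H` with
`φ(t)·t = ξ(t)·t₁(t)`, `t⁻¹·φ(t) = ζ(t)·t₂(t)`, `t⁻¹·φ(t)·t = ω(t)·t₃(t)`,
and each of `t ↦ tᵢ(t)` is a bijection of `T`. -/
theorem transversal_scheme
    {G : Type*} [Group G] [Fintype G] (H : Subgroup G) [H.Normal]
    (T : Set G) (τ : G ⧸ H → T)
    (hπτ : ∀ q : G ⧸ H, ((τ q : G) : G ⧸ H) = q)
    (hτπ : ∀ t : T, τ (((t : G) : G ⧸ H)) = t)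
    (Φ : G ⧸ H → G ⧸ H) (hΦ : IsColouringBijection Φ) :
    (letI π : G → G ⧸ H := QuotientGroup.mk
     letI φ : T → T := fun t => τ (Φ (π (t : G)))
     letI t1 : T → T := fun t => τ (Φ (π (t : G)) * π (t : G))
     letI t2 : T → T := fun t => τ ((π (t : G))⁻¹ * Φ (π (t : G)))
     letI t3 : T → T := fun t => τ ((π (t : G))⁻¹ * Φ (π (t : G)) * π (t : G))
     Function.Bijective φ ∧
     (∀ t : T,
       (∃! ξ : H, (φ t : G) * (t : G) = (ξ : G) * ((t1 t : G))) ∧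
       (∃! ζ : H, (t : G)⁻¹ * (φ t : G) = (ζ : G) * ((t2 t : G))) ∧
       (∃! ω : H, (t : G)⁻¹ * (φ t : G) * (t : G) = (ω : G) * ((t3 t : G)))) ∧
     Function.Bijective t1 ∧ Function.Bijective t2 ∧ Function.Bijective t3) := by
  obtain ⟨h0, h1, h2, h3⟩ := hΦ
  refine ⟨aux_bij H τ hπτ hτπ Φ h0, ?_, aux_bij H τ hπτ hτπ _ h1,
    aux_bij H τ hπτ hτπ _ h2, aux_bij H τ hπτ hτπ _ h3⟩
  intro t
  refine ⟨aux_exu H ?_, aux_exu H ?_, aux_exu H ?_⟩ <;>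
    simp only [QuotientGroup.mk_mul, QuotientGroup.mk_inv, hπτ]
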